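/- arXiv:1208.4902 — 2 statements merged into one kernel-verified Lean document; each statement's English description precedes it below -/
import Mathlib

section
/- Let R be a discrete valuation ring, A a finite torsion R-module, and S, T finite submodules of A. Suppose endomorphisms φ, ψ of A satisfy φ(S) = T and ψ(T) = S. Then there exist endomorphisms φ', ψ' of A with φ'(S) = T, ψ'(T) = S, and ψ'∘φ' restricted to S equal to the identity on S. -/
/-!
Set `g = ψ ∘ φ`, which maps the finite set `S` onto itself and hence permutes it.
A permutation of a finite set has finite order `n`, so `g ^ (n - 1)` inverts `g` on `S`
while still mapping `S` onto `S`; take `φ' = φ` and `ψ' = g ^ (n - 1) ∘ ψ`.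
-/

theorem Set.Finite.exists_iterate_eqOn_id_of_image_eq {α : Type*} {f : α → α} {s : Set α}
    (hs : s.Finite) (hf : f '' s = s) : ∃ n, 0 < n ∧ EqOn f^[n] id s := by
  have hmaps : MapsTo f s s := mapsTo_iff_image_subset.mpr hf.subset
  have hbij : BijOn f s s := (hs.surjOn_iff_bijOn_of_mapsTo hmaps).mp hf.symm.subset
  have : Finite s := hs
  obtain ⟨n, hn, hperm⟩ := (isOfFinOrder_of_finite (hbij.equiv f)).exists_pow_eq_one
  refine ⟨n, hn, fun x hx => ?_⟩
  have := congr_arg Subtype.val (Equiv.congr_fun hperm ⟨x, hx⟩)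
  rw [Equiv.Perm.coe_pow] at this
  exact (hmaps.coe_iterate_restrict ⟨x, hx⟩ n).symm.trans this

namespace Submodule

variable {R M : Type*} [Semiring R] [AddCommMonoid M] [Module R M]

theorem map_pow_eq_self {S : Submodule R M} {f : Module.End R M} (hf : S.map f = S) (n : ℕ) :
    S.map (f ^ n) = S := by
  induction n with
  | zero => rw [pow_zero, Module.End.one_eq_id, map_id]
  | succ n ih => rw [pow_succ, Module.End.mul_eq_comp, map_comp, hf, ih]

theorem exists_leftInverseOn_of_map_eq_self {S : Submodule R M} (hS : (S : Set M).Finite)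
    {f : Module.End R M} (hf : S.map f = S) :
    ∃ g : Module.End R M, S.map g = S ∧ ∀ s ∈ S, g (f s) = s := by
  obtain ⟨n, hn, hperiodic⟩ := hS.exists_iterate_eqOn_id_of_image_eq (by rw [← map_coe f S, hf])
  refine ⟨f ^ (n - 1), map_pow_eq_self hf _, fun s hs => ?_⟩
  rw [← Module.End.mul_apply, ← pow_succ, Nat.sub_add_cancel hn, Module.End.coe_pow]
  exact hperiodic hs

end Submodule

theorem mutual_surjections_can_be_made_inverse_general {R A : Type*} [CommRing R]
    [AddCommGroup A] [Module R A] [Finite A]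
    (S T : Submodule R A) (φ ψ : A →ₗ[R] A)
    (hφ : S.map φ = T) (hψ : T.map ψ = S) :
    ∃ φ' ψ' : A →ₗ[R] A,
      S.map φ' = T ∧ T.map ψ' = S ∧ ∀ s ∈ S, ψ' (φ' s) = s := by
  have hS : S.map (ψ ∘ₗ φ) = S := by rw [Submodule.map_comp, hφ, hψ]
  obtain ⟨g, hgS, hg⟩ := Submodule.exists_leftInverseOn_of_map_eq_self (Set.toFinite _) hS
  exact ⟨φ, g ∘ₗ ψ, hφ, by rw [Submodule.map_comp, hψ, hgS], hg⟩

/-- if endomorphisms of a finite torsion module map S onto T and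
T onto S, they may be modified so that the composite is the identity on S. -/
theorem mutual_surjections_can_be_made_inverse {R A : Type*} [CommRing R] [IsDomain R]
    [IsDiscreteValuationRing R] [AddCommGroup A] [Module R A] [Finite A]
    (htor : Module.IsTorsion R A)
    (S T : Submodule R A) (φ ψ : A →ₗ[R] A)
    (hφ : S.map φ = T) (hψ : T.map ψ = S) :
    ∃ φ' ψ' : A →ₗ[R] A,
      S.map φ' = T ∧ T.map ψ' = S ∧ ∀ s ∈ S, ψ' (φ' s) = s :=
  mutual_surjections_can_be_made_inverse_general S T φ ψ hφ hψ
end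

section
/- Let A = ⊕_{α≥1} (R/pᵅR)^{f_α} be a finite module over a discrete valuation ring R with finite residue field. For a ∈ A with coordinates a_{α,i} ∈ R/pᵅR, let I(a) be the order ideal of P_f generated by the orbits (v(a_{α,i}), α) of the nonzero coordinates, where v denotes p-height in R/pᵅR. Then the height of a in A equals h(I(a)) = min{v : (v,α) ∈ I(a)} (with min ∅ = ∞), and I(pa) = I(a)¹ where I¹ = {(v,α) : (v−1,α) ∈ I}. -/
noncomputable def pHeight {R A : Type*} [CommRing R] [AddCommGroup A] [Module R A]
    (p : R) (a : A) : ℕ∞ :=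
  ⨆ (n : ℕ) (_ : ∃ y : A, a = p ^ n • y), (n : ℕ∞)

def fundLE (x y : ℕ × ℕ) : Prop := y.1 ≤ x.1 ∧ x.2 - x.1 ≤ y.2 - y.1

def Pf (f : ℕ → ℕ) : Set (ℕ × ℕ) := {x | x.1 < x.2 ∧ 0 < f x.2}

/-- The shift I¹ = {(v,α) : (v−1,α) ∈ I} (inside P_f). -/
def shiftIdeal (f : ℕ → ℕ) (I : Set (ℕ × ℕ)) : Set (ℕ × ℕ) :=
  {x ∈ Pf f | 1 ≤ x.1 ∧ (x.1 - 1, x.2) ∈ I}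

noncomputable def idealHeight (I : Set (ℕ × ℕ)) : ℕ∞ :=
  sInf ((fun x : ℕ × ℕ => (x.1 : ℕ∞)) '' I)

/-- The module A = ⊕_{α} (R/pᵅR)^{f_α}. -/
abbrev ModA (R : Type*) [CommRing R] (p : R) (f : ℕ → ℕ) :=
  DirectSum (Σ α : ℕ, Fin (f α)) (fun i => R ⧸ Ideal.span {p ^ i.1})

/-- The order ideal I(a) of P_f generated by the orbits (height(a_{α,i}), α)
of the nonzero coordinates of a. -/
def idealOf {R : Type*} [CommRing R] (p : R) (f : ℕ → ℕ)
    (a : ModA R p f) : Set (ℕ × ℕ) :=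
  {y ∈ Pf f | ∃ (i : Σ α : ℕ, Fin (f α)) (m : ℕ),
    a i ≠ 0 ∧ pHeight p (a i) = (m : ℕ∞) ∧ fundLE y (m, i.1)}


/-!
Divisibility by `pⁿ` in a direct sum is tested coordinatewise, so the height of `a` is the
minimum of the heights of its coordinates, and this minimum is attained at the generators
`(v(a_{α,i}), α)` of `I(a)`. In `R/pᵅR` an element `x mod pᵅ` is divisible by `pⁿ` exactly
when `p ^ min n α ∣ x`; cancelling one factor `p` shows that multiplication by `p` raises a
height `m` to `m + 1` when `m + 1 < α` and kills the element otherwise, which is the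
coordinatewise form of `I(pa) = I(a)¹`.
-/

section pHeight

variable {R M : Type*} [CommRing R] [AddCommGroup M] [Module R M] {p : R}

theorem exists_eq_pow_smul_of_le {b : M} {m n : ℕ} (hmn : m ≤ n)
    (hb : ∃ y : M, b = p ^ n • y) : ∃ y : M, b = p ^ m • y := by
  obtain ⟨y, rfl⟩ := hb
  exact ⟨p ^ (n - m) • y, by rw [← mul_smul, ← pow_add, Nat.add_sub_cancel' hmn]⟩

theorem natCast_le_pHeight_iff {b : M} {n : ℕ} :
    (n : ℕ∞) ≤ pHeight p b ↔ ∃ y : M, b = p ^ n • y := by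
  refine ⟨fun hn => ?_, fun hb => le_iSup₂_of_le n hb le_rfl⟩
  by_contra hb
  have hle : pHeight p b ≤ (n - 1 : ℕ) :=
    iSup₂_le fun m hm => Nat.cast_le.mpr <| Nat.le_sub_one_of_lt <|
      lt_of_not_ge fun hnm => hb (exists_eq_pow_smul_of_le hnm hm)
  have : n ≤ n - 1 := Nat.cast_le.mp (hn.trans hle)
  obtain rfl : n = 0 := by omega
  exact hb ⟨b, by rw [pow_zero, one_smul]⟩

theorem pHeight_zero : pHeight p (0 : M) = ⊤ :=
  ENat.eq_of_forall_natCast_le_iff fun n => by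
    simpa using natCast_le_pHeight_iff.mpr ⟨0, (smul_zero _).symm⟩

theorem pHeight_eq_natCast_of_le_of_not_le {b : M} {n : ℕ} (h₁ : (n : ℕ∞) ≤ pHeight p b)
    (h₂ : ¬ ((n + 1 : ℕ) : ℕ∞) ≤ pHeight p b) : pHeight p b = n := by
  refine le_antisymm ?_ h₁
  rw [Nat.cast_succ, not_le, ENat.lt_add_one_iff (ENat.natCast_ne_top n)] at h₂
  exact h₂

end pHeight

section DirectSum

open DirectSum

variable {R ι : Type*} [CommRing R] {p : R} {β : ι → Type*}
  [∀ i, AddCommGroup (β i)] [∀ i, Module R (β i)]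

theorem DirectSum.exists_eq_smul_iff {r : R} {a : ⨁ i, β i} :
    (∃ y : ⨁ i, β i, a = r • y) ↔ ∀ i, ∃ y : β i, a i = r • y := by
  classical
  refine ⟨fun ⟨y, hy⟩ i => ⟨y i, by rw [hy, DirectSum.smul_apply]⟩, fun h => ?_⟩
  choose y hy using h
  refine ⟨∑ i ∈ DFinsupp.support a, lof R ι β i (y i), ?_⟩
  rw [Finset.smul_sum]
  conv_lhs => rw [← sum_support_of a]
  refine Finset.sum_congr rfl fun i _ => ?_
  rw [← LinearMap.map_smul, ← hy i]
  rfl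

theorem pHeight_directSum (a : ⨁ i, β i) : pHeight p a = ⨅ i, pHeight p (a i) := by
  refine ENat.eq_of_forall_natCast_le_iff fun n => ?_
  simp only [le_iInf_iff, natCast_le_pHeight_iff]
  exact DirectSum.exists_eq_smul_iff

end DirectSum

section Quotient

variable {R : Type*} [CommRing R] {p : R} {α : ℕ}

theorem natCast_le_pHeight_mk_iff {x : R} {n : ℕ} :
    (n : ℕ∞) ≤ pHeight p (Ideal.Quotient.mk (Ideal.span {p ^ α}) x) ↔ p ^ min n α ∣ x := by
  rw [natCast_le_pHeight_iff]
  constructor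
  · rintro ⟨y, hy⟩
    obtain ⟨z, rfl⟩ := Ideal.Quotient.mk_surjective y
    have hsub : p ^ α ∣ x - p ^ n * z := by
      rw [← Ideal.mem_span_singleton, ← Ideal.Quotient.eq]
      exact hy
    have hdvd : p ^ min n α ∣ p ^ n * z := (pow_dvd_pow p (min_le_left n α)).mul_right z
    simpa using (((pow_dvd_pow p (min_le_right n α)).trans hsub).add hdvd)
  · rintro ⟨z, rfl⟩
    rcases le_total n α with h | h
    · rw [min_eq_left h]
      exact ⟨Ideal.Quotient.mk _ z, rfl⟩
    · refine ⟨0, ?_⟩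
      rw [smul_zero, min_eq_right h, Ideal.Quotient.eq_zero_iff_dvd]
      exact dvd_mul_right _ _

theorem pHeight_lt_of_ne_zero {b : R ⧸ Ideal.span {p ^ α}} (hb : b ≠ 0) :
    pHeight p b < α := by
  obtain ⟨x, rfl⟩ := Ideal.Quotient.mk_surjective b
  refine lt_of_not_ge fun h => hb ?_
  rw [Ideal.Quotient.eq_zero_iff_dvd]
  simpa using natCast_le_pHeight_mk_iff.mp h

theorem exists_pHeight_eq_of_ne_zero {b : R ⧸ Ideal.span {p ^ α}} (hb : b ≠ 0) :
    ∃ m < α, pHeight p b = m := by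
  obtain ⟨m, hm⟩ := ENat.ne_top_iff_exists.mp (pHeight_lt_of_ne_zero hb).ne_top
  exact ⟨m, by exact_mod_cast hm ▸ pHeight_lt_of_ne_zero hb, hm.symm⟩

theorem succ_le_pHeight_smul_iff [IsDomain R] (hp : p ≠ 0) {b : R ⧸ Ideal.span {p ^ α}}
    {n : ℕ} (hn : n + 1 ≤ α) :
    ((n + 1 : ℕ) : ℕ∞) ≤ pHeight p (p • b) ↔ (n : ℕ∞) ≤ pHeight p b := by
  obtain ⟨x, rfl⟩ := Ideal.Quotient.mk_surjective b
  rw [Algebra.smul_def, Ideal.Quotient.algebraMap_eq, ← map_mul, natCast_le_pHeight_mk_iff,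
    natCast_le_pHeight_mk_iff, min_eq_left hn, min_eq_left (by omega), pow_succ',
    mul_dvd_mul_iff_left hp]

variable [IsDomain R] {b : R ⧸ Ideal.span {p ^ α}}

theorem pHeight_smul (hp : p ≠ 0) {m : ℕ} (hb : pHeight p b = m) (hm : m + 1 < α) :
    pHeight p (p • b) = (m + 1 : ℕ) := by
  refine pHeight_eq_natCast_of_le_of_not_le ((succ_le_pHeight_smul_iff hp hm.le).mpr hb.ge) ?_
  rw [succ_le_pHeight_smul_iff hp hm, hb, Nat.cast_le]
  omega

theorem smul_eq_zero_of_le (hp : p ≠ 0) {m : ℕ} (hb : pHeight p b = m) (hm : α ≤ m + 1) : p • b = 0 := by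
  have hα : m < α := by
    have hb0 : b ≠ 0 := by rintro rfl; simp [pHeight_zero] at hb
    exact_mod_cast hb ▸ pHeight_lt_of_ne_zero hb0
  by_contra h
  have hle : ((α - 1 : ℕ) : ℕ∞) ≤ pHeight p b := hb ▸ Nat.cast_le.mpr (by omega)
  have := (succ_le_pHeight_smul_iff hp (by omega)).mpr hle
  rw [Nat.sub_add_cancel (by omega)] at this
  exact (pHeight_lt_of_ne_zero h).not_ge this

theorem exists_fundLE_pHeight_smul_iff (hp : p ≠ 0) {v β : ℕ} (hvβ : v < β) :
    (∃ n : ℕ, p • b ≠ 0 ∧ pHeight p (p • b) = n ∧ fundLE (v, β) (n, α)) ↔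
      1 ≤ v ∧ ∃ n : ℕ, b ≠ 0 ∧ pHeight p b = n ∧ fundLE (v - 1, β) (n, α) := by
  constructor
  · rintro ⟨n, hpb, hn, hle₁, hle₂⟩
    have hb : b ≠ 0 := by rintro rfl; exact hpb (smul_zero p)
    obtain ⟨m, -, hm⟩ := exists_pHeight_eq_of_ne_zero hb
    have hlt : m + 1 < α := lt_of_not_ge fun h => hpb (smul_eq_zero_of_le hp hm h)
    obtain rfl : n = m + 1 := by exact_mod_cast hn.symm.trans (pHeight_smul hp hm hlt)
    simp only at hle₁ hle₂
    exact ⟨by omega, m, hb, hm, by omega, by omega⟩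
  · rintro ⟨hv, m, hb, hm, hle₁, hle₂⟩
    simp only at hle₁ hle₂
    have hlt : m + 1 < α := by omega
    have hpb := pHeight_smul hp hm hlt
    refine ⟨m + 1, fun h => ?_, hpb, by omega, by omega⟩
    rw [h, pHeight_zero] at hpb
    exact ENat.top_ne_natCast _ hpb

end Quotient

section idealOf

variable {R : Type*} [CommRing R] {p : R} {f : ℕ → ℕ}

theorem mem_idealOf_of_pHeight_eq {a : ModA R p f} {i : Σ α : ℕ, Fin (f α)} {m : ℕ}
    (hi : a i ≠ 0) (hm : pHeight p (a i) = m) : (m, i.1) ∈ idealOf p f a :=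
  ⟨⟨by exact_mod_cast hm ▸ pHeight_lt_of_ne_zero hi, i.2.pos⟩, i, m, hi, hm, le_rfl, le_rfl⟩

theorem idealHeight_idealOf (a : ModA R p f) :
    idealHeight (idealOf p f a) = ⨅ i, pHeight p (a i) := by
  refine le_antisymm (le_iInf fun i => ?_) (le_sInf ?_)
  · by_cases hi : a i = 0
    · simp [hi, pHeight_zero]
    · obtain ⟨m, -, hm⟩ := exists_pHeight_eq_of_ne_zero hi
      rw [hm]
      exact sInf_le ⟨_, mem_idealOf_of_pHeight_eq hi hm, rfl⟩
  · rintro _ ⟨y, ⟨-, i, m, -, hm, hle, -⟩, rfl⟩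
    exact (iInf_le _ i).trans (hm ▸ Nat.cast_le.mpr hle)

theorem pHeight_eq_idealHeight_idealOf (a : ModA R p f) :
    pHeight p a = idealHeight (idealOf p f a) := by
  rw [pHeight_directSum, idealHeight_idealOf]

theorem idealOf_smul [IsDomain R] (hp : p ≠ 0) (a : ModA R p f) :
    idealOf p f (p • a) = shiftIdeal f (idealOf p f a) := by
  ext ⟨v, β⟩
  simp only [idealOf, shiftIdeal, Pf, Set.mem_ofPred_eq, DirectSum.smul_apply]
  constructor
  · rintro ⟨⟨hvβ, hfβ⟩, i, hi⟩
    obtain ⟨hv, hi'⟩ := (exists_fundLE_pHeight_smul_iff hp hvβ).mp hi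
    exact ⟨⟨hvβ, hfβ⟩, hv, ⟨by omega, hfβ⟩, i, hi'⟩
  · rintro ⟨⟨hvβ, hfβ⟩, hv, -, i, hi⟩
    exact ⟨⟨hvβ, hfβ⟩, i, (exists_fundLE_pHeight_smul_iff hp hvβ).mpr ⟨hv, hi⟩⟩

end idealOf

theorem height_eq_ideal_height_and_shift_general {R : Type*} [CommRing R] [IsDomain R]
    (p : R) (hp : Irreducible p)
    (f : ℕ → ℕ) (a : ModA R p f) :
    pHeight p a = idealHeight (idealOf p f a) ∧
    idealOf p f (p • a) = shiftIdeal f (idealOf p f a) :=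
  ⟨pHeight_eq_idealHeight_idealOf a, idealOf_smul hp.ne_zero a⟩

/-- the height of a equals h(I(a)), and I(pa) = I(a)¹. -/
theorem height_eq_ideal_height_and_shift {R : Type*} [CommRing R] [IsDomain R]
    [IsDiscreteValuationRing R] (p : R) (hp : Irreducible p)
    [Finite (R ⧸ Ideal.span {p})]
    (f : ℕ → ℕ) (hf : (Function.support f).Finite) (a : ModA R p f) :
    pHeight p a = idealHeight (idealOf p f a) ∧
    idealOf p f (p • a) = shiftIdeal f (idealOf p f a) :=
  height_eq_ideal_height_and_shift_general p hp f a
end
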